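/- Under Hypothesis 1.1 and θ ∈ (0,1), the covariance function R(k) = E(Y_0 Y_k) of the stationary solution Y_t = Σ_{j≥0} θ^j ξ_{t−j} satisfies R(k) ~ C'_{θ,H} L(k) |k|^{2H−2} as k → ∞, for some constant C'_{θ,H} > 0 depending only on θ and H. -/

import Mathlib

open MeasureTheory ProbabilityTheory Filter Real Set
open scoped NNReal ENNReal BigOperators Topology

noncomputable section

/-- A family of real random variables is (jointly) centered Gaussian if every finite
linear combination has a centered Gaussian distribution. -/
def IsCenteredGaussianFamily {Ω : Type*} [MeasurableSpace Ω] (P : Measure Ω)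
    {ι : Type*} (ξ : ι → Ω → ℝ) : Prop :=
  ∀ (s : Finset ι) (c : ι → ℝ), ∃ v : NNReal,
    P.map (fun ω => ∑ i ∈ s, c i * ξ i ω) = gaussianReal 0 v

/-- `L` is slowly varying at infinity in Zygmund's sense: for every `δ > 0`,
`x ^ δ * L x` is eventually increasing and `x ^ (-δ) * L x` is eventually decreasing. -/
def SlowlyVaryingZygmund (L : ℝ → ℝ) : Prop :=
  ∀ δ : ℝ, 0 < δ → ∃ x₀ : ℝ, 0 < x₀ ∧
    MonotoneOn (fun x : ℝ => x ^ δ * L x) (Set.Ici x₀) ∧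
    AntitoneOn (fun x : ℝ => x ^ (-δ) * L x) (Set.Ici x₀)

/-- Hypothesis 1.1: `ξ` is a centered stationary Gaussian sequence with covariance
`ρ(k) = L(|k|) |k|^(2H-2)` (`k ≠ 0`), `ρ(0) = 1`, `H ∈ (1/2, 1)`, `L` positive and slowly
varying at infinity in Zygmund's sense, and `λ ↦ L(1/λ)` of bounded variation on `(a, π)`. -/
structure Hypothesis11 {Ω : Type*} [MeasurableSpace Ω] (P : Measure Ω)
    (ξ : ℤ → Ω → ℝ) (ρ : ℤ → ℝ) (L : ℝ → ℝ) (H : ℝ) : Prop where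
  meas : ∀ t, Measurable (ξ t)
  gauss : IsCenteredGaussianFamily P ξ
  cov : ∀ s t : ℤ, ∫ ω, ξ s ω * ξ t ω ∂P = ρ (t - s)
  Hmem : H ∈ Set.Ioo (1/2 : ℝ) 1
  Lpos : ∀ x : ℝ, 0 < x → 0 < L x
  Lslow : SlowlyVaryingZygmund L
  LBV : ∀ a : ℝ, 0 < a → BoundedVariationOn (fun lam : ℝ => L lam⁻¹) (Set.Ioo a π)
  rho_zero : ρ 0 = 1
  rho_eq : ∀ k : ℤ, k ≠ 0 → ρ k = L |(k : ℝ)| * |(k : ℝ)| ^ (2 * H - 2)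

/-- The stationary solution `Y t = ∑_{j ≥ 0} θ^j ξ_{t-j}` of the AR(1) model. -/
def Ysol {Ω : Type*} (θ : ℝ) (ξ : ℤ → Ω → ℝ) (t : ℤ) (ω : Ω) : ℝ :=
  ∑' j : ℕ, θ ^ j * ξ (t - j) ω

/-- The solution `X t = Y t + θ^t ζ` of the AR(1) model with `X 0 = 0`. -/
def Xsol {Ω : Type*} (θ : ℝ) (ξ : ℤ → Ω → ℝ) (ζ : Ω → ℝ) (t : ℕ) (ω : Ω) : ℝ :=
  Ysol θ ξ t ω + θ ^ t * ζ ω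

/-- `f θ = ∑_{i,j ≥ 0} θ^(i+j) ρ(i - j)`, the second moment of the stationary solution. -/
def fFun (ρ : ℤ → ℝ) (θ : ℝ) : ℝ :=
  ∑' p : ℕ × ℕ, θ ^ (p.1 + p.2) * ρ ((p.1 : ℤ) - (p.2 : ℤ))

/-- Covariance function `R(k) = E(Y_0 Y_k)` of the stationary solution. -/
def RY {Ω : Type*} [MeasurableSpace Ω] (P : Measure Ω) (θ : ℝ) (ξ : ℤ → Ω → ℝ) (k : ℤ) : ℝ :=
  ∫ ω, Ysol θ ξ 0 ω * Ysol θ ξ k ω ∂P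

/-- `σ_H² = 2 ∑_{k ∈ ℤ} R(k)²`. -/
def sigmaH2 {Ω : Type*} [MeasurableSpace Ω] (P : Measure Ω) (θ : ℝ) (ξ : ℤ → Ω → ℝ) : ℝ :=
  2 * ∑' k : ℤ, (RY P θ ξ k) ^ 2

/-- Empirical second moment `(1/n) ∑_{t=1}^n X_t²`. -/
def empAvg {Ω : Type*} (X : ℕ → Ω → ℝ) (n : ℕ) (ω : Ω) : ℝ :=
  (n : ℝ)⁻¹ * ∑ t ∈ Finset.Icc 1 n, (X t ω) ^ 2

/-- `V_n = n^{-1/2} ∑_{t=1}^n (Y_t² - E Y_t²)`. -/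
def Vstat {Ω : Type*} [MeasurableSpace Ω] (P : Measure Ω) (Y : ℤ → Ω → ℝ) (n : ℕ) (ω : Ω) : ℝ :=
  (Real.sqrt n)⁻¹ * ∑ t ∈ Finset.Icc 1 n, ((Y (t : ℤ) ω) ^ 2 - ∫ ω', (Y (t : ℤ) ω') ^ 2 ∂P)

/-- `v_n = (E V_n²)^{1/2}`. -/
def vstat {Ω : Type*} [MeasurableSpace Ω] (P : Measure Ω) (Y : ℤ → Ω → ℝ) (n : ℕ) : ℝ :=
  Real.sqrt (∫ ω, (Vstat P Y n ω) ^ 2 ∂P)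

/-- Total variation distance between two laws on `ℝ`. -/
def dTV (μ ν : Measure ℝ) : ℝ :=
  ⨆ B : {B : Set ℝ // MeasurableSet B}, |(μ B).toReal - (ν B).toReal|

/-- `h` is a spectral density of the autocovariance function `R`:
`h` is nonnegative, even, integrable on `[-π, π]`, and `R k = ∫_{-π}^{π} cos(kλ) h(λ) dλ`. -/
def IsSpectralDensity (R : ℤ → ℝ) (h : ℝ → ℝ) : Prop :=
  (∀ lam : ℝ, 0 ≤ h lam) ∧ IntegrableOn h (Set.Icc (-π) π) ∧
  (∀ lam : ℝ, h (-lam) = h lam) ∧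
  ∀ k : ℤ, R k = ∫ lam in (-π)..π, Real.cos (k * lam) * h lam

/-- The standard normal distribution function `Φ`. -/
def stdNormalCDF (z : ℝ) : ℝ := ((gaussianReal 0 1) (Set.Iic z)).toReal

/-!
Multiplying out the two series, `R(k) = ∑_{i,j ≥ 0} θ^(i+j) ρ(k + i - j)`; exchanging sum and
expectation is legitimate because the `ξ_t` are bounded in `L²`. After division by
`L(k) k^(2H-2)` each term tends to `θ^(i+j)`, since Zygmund's condition (with `δ = 1`) gives
`L(y)/L(x) ≤ max (y/x) (x/y)` for large `x, y`. The same bound dominates the terms with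
`2j ≤ k` by `4 (1 + i) θ^(i+j)`; for `2j > k` one uses `|ρ| ≤ 1` and `L(k) k^(2H-2) ≳ k^(-2)`,
and `k² ≤ 4j²`. Dominated convergence gives the constant `C' = ∑ θ^(i+j) = (1 - θ)^(-2)`.
-/

theorem tendsto_add_div_self_atTop (m : ℝ) : Tendsto (fun x : ℝ => (x + m) / x) atTop (𝓝 1) := by
  have h := tendsto_const_nhds (x := (1 : ℝ)).add
    ((tendsto_const_nhds (x := m)).div_atTop tendsto_id)
  rw [add_zero] at h
  refine h.congr' ?_
  filter_upwards [eventually_gt_atTop 0] with x hx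
  simp only [id]
  field_simp

namespace SlowlyVaryingZygmund

variable {L : ℝ → ℝ}

theorem exists_div_le_max (hL : SlowlyVaryingZygmund L) (hpos : ∀ x, 0 < x → 0 < L x) :
    ∃ x₀ > 0, ∀ x y, x₀ ≤ x → x₀ ≤ y → L y / L x ≤ max (y / x) (x / y) := by
  obtain ⟨x₀, hx₀, hmono, hanti⟩ := hL 1 one_pos
  refine ⟨x₀, hx₀, fun x y hx hy => ?_⟩
  have hx' : 0 < x := hx₀.trans_le hx
  have hy' : 0 < y := hx₀.trans_le hy
  rw [div_le_iff₀ (hpos x hx')]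
  rcases le_total x y with hxy | hyx
  · have h := hanti (mem_Ici.2 hx) (mem_Ici.2 hy) hxy
    simp only [rpow_neg_one] at h
    calc L y = y * (y⁻¹ * L y) := by field_simp
      _ ≤ y * (x⁻¹ * L x) := by gcongr
      _ = y / x * L x := by ring
      _ ≤ max (y / x) (x / y) * L x := by gcongr; exacts [(hpos x hx').le, le_max_left _ _]
  · have h := hmono (mem_Ici.2 hy) (mem_Ici.2 hx) hyx
    simp only [rpow_one] at h
    calc L y = y⁻¹ * (y * L y) := by field_simp
      _ ≤ y⁻¹ * (x * L x) := by gcongr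
      _ = x / y * L x := by ring
      _ ≤ max (y / x) (x / y) * L x := by gcongr; exacts [(hpos x hx').le, le_max_right _ _]

theorem tendsto_div_add (hL : SlowlyVaryingZygmund L) (hpos : ∀ x, 0 < x → 0 < L x) (m : ℝ) :
    Tendsto (fun x => L (x + m) / L x) atTop (𝓝 1) := by
  obtain ⟨x₀, hx₀, hmax⟩ := hL.exists_div_le_max hpos
  have h₁ := tendsto_add_div_self_atTop m
  have h₂ : Tendsto (fun x => x / (x + m)) atTop (𝓝 1) := by
    simpa only [inv_div, inv_one] using h₁.inv₀ one_ne_zero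
  have hup : Tendsto (fun x => max ((x + m) / x) (x / (x + m))) atTop (𝓝 1) := by
    simpa only [max_self] using h₁.max h₂
  have hlow : Tendsto (fun x => (max (x / (x + m)) ((x + m) / x))⁻¹) atTop (𝓝 1) := by
    have h := h₂.max h₁
    rw [max_self] at h
    simpa only [inv_one] using h.inv₀ one_ne_zero
  have hlarge : ∀ᶠ x in atTop, x₀ ≤ x ∧ x₀ ≤ x + m := by
    filter_upwards [eventually_ge_atTop x₀, eventually_ge_atTop (x₀ - m)] with x hx hxm
    exact ⟨hx, by linarith⟩
  refine tendsto_of_tendsto_of_tendsto_of_le_of_le' hlow hup ?_ ?_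
  · filter_upwards [hlarge] with x ⟨hx, hxm⟩
    simpa only [inv_div] using
      inv_anti₀ (div_pos (hpos _ (hx₀.trans_le hx)) (hpos _ (hx₀.trans_le hxm))) (hmax _ _ hxm hx)
  · filter_upwards [hlarge] with x ⟨hx, hxm⟩
    exact hmax _ _ hx hxm

theorem tendsto_mul_rpow_div (hL : SlowlyVaryingZygmund L) (hpos : ∀ x, 0 < x → 0 < L x)
    (α m : ℝ) : Tendsto (fun x => L (x + m) * (x + m) ^ α / (L x * x ^ α)) atTop (𝓝 1) := by
  have hpow := (continuousAt_rpow_const 1 α (Or.inl one_ne_zero)).tendsto.comp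
    (tendsto_add_div_self_atTop m)
  have h := (hL.tendsto_div_add hpos m).mul hpow
  rw [one_rpow, mul_one] at h
  refine h.congr' ?_
  filter_upwards [eventually_gt_atTop 0, eventually_gt_atTop (-m)] with x hx hxm
  rw [Function.comp_apply, div_rpow (by linarith) hx.le, mul_div_mul_comm]

theorem exists_le_mul_rpow_mul_sq (hL : SlowlyVaryingZygmund L) (hpos : ∀ x, 0 < x → 0 < L x)
    {α : ℝ} (hα : -1 ≤ α) : ∃ c > 0, ∀ᶠ x in atTop, c ≤ L x * x ^ α * x ^ 2 := by
  obtain ⟨x₀, hx₀, hmax⟩ := hL.exists_div_le_max hpos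
  refine ⟨x₀ * L x₀, mul_pos hx₀ (hpos x₀ hx₀), ?_⟩
  filter_upwards [eventually_ge_atTop x₀, eventually_ge_atTop 1] with x hx hx1
  have hx' : 0 < x := hx₀.trans_le hx
  have hmono : x₀ * L x₀ ≤ x * L x := by
    have h := hmax x x₀ hx le_rfl
    have hle : x₀ / x ≤ x / x₀ := by rw [div_le_div_iff₀ hx' hx₀]; nlinarith
    rw [max_eq_right hle, div_le_div_iff₀ (hpos x hx') hx₀] at h
    linarith
  have hrpow : 1 ≤ x ^ α * x := by
    rw [← rpow_add_one hx'.ne']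
    exact one_le_rpow hx1 (by linarith)
  calc x₀ * L x₀ = x₀ * L x₀ * 1 := (mul_one _).symm
    _ ≤ x * L x * (x ^ α * x) :=
        mul_le_mul hmono hrpow zero_le_one (mul_nonneg hx'.le (hpos x hx').le)
    _ = L x * x ^ α * x ^ 2 := by ring

theorem exists_mul_rpow_div_le (hL : SlowlyVaryingZygmund L) (hpos : ∀ x, 0 < x → 0 < L x)
    {α : ℝ} (hα₁ : -1 ≤ α) (hα₀ : α ≤ 0) :
    ∃ x₀ > 0, ∀ x y a : ℝ, x₀ ≤ x / 2 → 1 ≤ x → x / 2 ≤ y → y ≤ x + a → 0 ≤ a →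
      L y * y ^ α / (L x * x ^ α) ≤ 4 * (1 + a) := by
  obtain ⟨x₀, hx₀, hmax⟩ := hL.exists_div_le_max hpos
  refine ⟨x₀, hx₀, fun x y a hx hx1 hxy hyx ha => ?_⟩
  have hx' : 0 < x := by linarith
  have hy' : 0 < y := by linarith
  have hratio : L y / L x ≤ 2 * (1 + a) := by
    refine (hmax x y (by linarith) (by linarith)).trans (max_le ?_ ?_)
    · rw [div_le_iff₀ hx']; nlinarith
    · rw [div_le_iff₀ hy']; nlinarith
  have hrpow : (y / x) ^ α ≤ 2 := by
    calc (y / x) ^ α ≤ (1 / 2) ^ α :=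
          rpow_le_rpow_of_nonpos (by norm_num) (by rw [le_div_iff₀ hx']; linarith) hα₀
      _ = 2 ^ (-α) := by rw [one_div, inv_rpow zero_le_two, rpow_neg zero_le_two]
      _ ≤ 2 ^ (1 : ℝ) := rpow_le_rpow_of_exponent_le one_le_two (by linarith)
      _ = 2 := rpow_one 2
  calc L y * y ^ α / (L x * x ^ α) = L y / L x * (y / x) ^ α := by
        rw [div_rpow hy'.le hx'.le, mul_div_mul_comm]
    _ ≤ 2 * (1 + a) * 2 := by gcongr
    _ = 4 * (1 + a) := by ring

end SlowlyVaryingZygmund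

section SquareIntegrable

variable {Ω : Type*} [MeasurableSpace Ω] {P : Measure Ω} {ξ : ℤ → Ω → ℝ} {M : ℝ≥0}

theorem lintegral_enorm_mul_le_of_eLpNorm_le (hm : ∀ t, AEStronglyMeasurable (ξ t) P)
    (hM : ∀ t, eLpNorm (ξ t) 2 P ≤ M) (s t : ℤ) :
    ∫⁻ ω, ‖ξ s ω * ξ t ω‖ₑ ∂P ≤ M * M := by
  rw [← eLpNorm_one_eq_lintegral_enorm]
  calc eLpNorm (ξ s • ξ t) 1 P ≤ eLpNorm (ξ s) 2 P * eLpNorm (ξ t) 2 P :=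
        eLpNorm_smul_le_mul_eLpNorm (p := 2) (q := 2) (hm t) (hm s)
    _ ≤ M * M := by gcongr <;> apply hM

theorem ae_summable_norm_geometric_shift (hm : ∀ t, AEStronglyMeasurable (ξ t) P)
    (hM : ∀ t, eLpNorm (ξ t) 2 P ≤ M) {θ : ℝ} (hθ : ‖θ‖ < 1) (t : ℤ) :
    ∀ᵐ ω ∂P, Summable fun j : ℕ => ‖θ ^ j * ξ (t - j) ω‖ := by
  refine summable_norm_of_tsum_eLpNorm_ne_top one_le_two (fun j => (hm _).const_mul _) ?_
  have hθ' : ‖θ‖ₑ < 1 := by simpa [← ofReal_norm] using hθ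
  have hterm (j : ℕ) : eLpNorm (fun ω => θ ^ j * ξ (t - j) ω) 2 P ≤ ‖θ‖ₑ ^ j * M := by
    refine (eLpNorm_const_smul_le (c := θ ^ j) (f := ξ (t - j))).trans ?_
    rw [enorm_pow]
    gcongr
    exact hM _
  refine ne_top_of_le_ne_top ?_ (ENNReal.tsum_le_tsum hterm)
  rw [ENNReal.tsum_mul_right, ENNReal.tsum_geometric]
  exact ENNReal.mul_ne_top (ENNReal.inv_ne_top.2 (tsub_pos_of_lt hθ').ne') ENNReal.coe_ne_top

theorem integral_Ysol_mul_Ysol (hm : ∀ t, AEStronglyMeasurable (ξ t) P)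
    (hM : ∀ t, eLpNorm (ξ t) 2 P ≤ M) {θ : ℝ} (hθ : ‖θ‖ < 1) (s t : ℤ) :
    ∫ ω, Ysol θ ξ s ω * Ysol θ ξ t ω ∂P =
      ∑' p : ℕ × ℕ, θ ^ p.1 * θ ^ p.2 * ∫ ω, ξ (s - p.1) ω * ξ (t - p.2) ω ∂P := by
  set g : ℕ × ℕ → Ω → ℝ := fun p ω => θ ^ p.1 * ξ (s - p.1) ω * (θ ^ p.2 * ξ (t - p.2) ω)
  have hg (p : ℕ × ℕ) :
      g p = fun ω => θ ^ p.1 * θ ^ p.2 * (ξ (s - p.1) ω * ξ (t - p.2) ω) := by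
    funext ω; ring
  have hprod : ∀ᵐ ω ∂P, Ysol θ ξ s ω * Ysol θ ξ t ω = ∑' p, g p ω := by
    filter_upwards [ae_summable_norm_geometric_shift hm hM hθ s,
      ae_summable_norm_geometric_shift hm hM hθ t] with ω hs ht
    exact tsum_mul_tsum_of_summable_norm hs ht
  have hθ' : ‖θ‖ₑ < 1 := by simpa [← ofReal_norm] using hθ
  have hterm (p : ℕ × ℕ) : ∫⁻ ω, ‖g p ω‖ₑ ∂P ≤ ‖θ‖ₑ ^ p.1 * ‖θ‖ₑ ^ p.2 * (M * M) := by
    simp only [hg, enorm_mul, enorm_pow]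
    rw [lintegral_const_mul' _ _ (by finiteness)]
    gcongr
    simpa only [enorm_mul] using lintegral_enorm_mul_le_of_eLpNorm_le hm hM _ _
  have hfin : ∑' p, ∫⁻ ω, ‖g p ω‖ₑ ∂P ≠ ∞ := by
    refine ne_top_of_le_ne_top ?_ (ENNReal.tsum_le_tsum hterm)
    rw [ENNReal.tsum_mul_right, ENNReal.tsum_prod']
    simp only [ENNReal.tsum_mul_left, ENNReal.tsum_mul_right, ENNReal.tsum_geometric]
    have : (1 - ‖θ‖ₑ)⁻¹ ≠ ∞ := ENNReal.inv_ne_top.2 (tsub_pos_of_lt hθ').ne'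
    finiteness
  rw [integral_congr_ae hprod, integral_tsum (fun p => by rw [hg]; fun_prop) hfin]
  simp only [hg, integral_const_mul]

end SquareIntegrable

theorem tendsto_tsum_mul_shift_div {w : ℕ × ℕ → ℝ}
    (hw : Summable fun p : ℕ × ℕ => ‖w p‖ * (1 + p.1 + (p.2 : ℝ) ^ 2))
    {ρ : ℤ → ℝ} {r : ℕ → ℝ} {C D : ℝ}
    (hlim : ∀ m : ℤ, Tendsto (fun k : ℕ => ρ (k + m) / r k) atTop (𝓝 1))
    (hnear : ∀ᶠ k : ℕ in atTop, ∀ i j : ℕ, 2 * j ≤ k → |ρ (k + i - j) / r k| ≤ C * (1 + i))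
    (hfar : ∀ᶠ k : ℕ in atTop, ∀ n : ℤ, |ρ n / r k| ≤ D * k ^ 2) :
    Tendsto (fun k : ℕ => (∑' p : ℕ × ℕ, w p * ρ (k + p.1 - p.2)) / r k) atTop
      (𝓝 (∑' p, w p)) := by
  simp only [← tsum_div_const]
  refine tendsto_tsum_of_dominated_convergence (hw.mul_left (|C| + 4 * |D|)) (fun p => ?_) ?_
  · simpa [mul_div_assoc, add_sub_assoc] using (hlim (p.1 - p.2)).const_mul (w p)
  filter_upwards [hnear, hfar] with k hk_near hk_far
  rintro ⟨i, j⟩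
  have hρ : |ρ (k + i - j) / r k| ≤ (|C| + 4 * |D|) * (1 + i + (j : ℝ) ^ 2) := by
    rcases le_or_gt (2 * j) k with hj | hj
    · calc |ρ (k + i - j) / r k| ≤ C * (1 + i) := hk_near i j hj
        _ ≤ |C| * (1 + i) := by gcongr; exact le_abs_self C
        _ ≤ (|C| + 4 * |D|) * (1 + i + (j : ℝ) ^ 2) :=
          mul_le_mul (by linarith [abs_nonneg D]) (by linarith [sq_nonneg (j : ℝ)])
            (by positivity) (by positivity)
    · have hkj : (k : ℝ) ≤ 2 * j := by exact_mod_cast hj.le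
      calc |ρ (k + i - j) / r k| ≤ D * k ^ 2 := hk_far _
        _ ≤ |D| * (2 * j) ^ 2 := by gcongr; exact le_abs_self D
        _ ≤ (|C| + 4 * |D|) * (1 + i + (j : ℝ) ^ 2) := by nlinarith [abs_nonneg C, abs_nonneg D]
  rw [mul_div_assoc, norm_mul, Real.norm_eq_abs (ρ _ / _)]
  calc ‖w (i, j)‖ * |ρ (k + i - j) / r k|
      ≤ ‖w (i, j)‖ * ((|C| + 4 * |D|) * (1 + i + (j : ℝ) ^ 2)) := by gcongr
    _ = (|C| + 4 * |D|) * (‖w (i, j)‖ * (1 + i + (j : ℝ) ^ 2)) := by ring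

theorem summable_norm_pow_mul_pow_mul_moment {θ : ℝ} (hθ : ‖θ‖ < 1) :
    Summable fun p : ℕ × ℕ => ‖θ ^ p.1 * θ ^ p.2‖ * (1 + p.1 + (p.2 : ℝ) ^ 2) := by
  have hθ' : ‖‖θ‖‖ < 1 := by rwa [norm_norm]
  have hgeom : Summable fun j : ℕ => ‖θ‖ ^ j := summable_geometric_of_lt_one (norm_nonneg θ) hθ
  have hmom (n : ℕ) : Summable fun j : ℕ => (j : ℝ) ^ n * ‖θ‖ ^ j :=
    summable_pow_mul_geometric_of_norm_lt_one n hθ'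
  have h₀ : Summable fun i : ℕ => ‖θ‖ ^ i + i * ‖θ‖ ^ i := hgeom.add (by simpa using hmom 1)
  have h₁ : Summable fun p : ℕ × ℕ => (‖θ‖ ^ p.1 + p.1 * ‖θ‖ ^ p.1) * ‖θ‖ ^ p.2 :=
    h₀.mul_of_nonneg hgeom (fun _ => by positivity) (fun _ => by positivity)
  have h₂ : Summable fun p : ℕ × ℕ => ‖θ‖ ^ p.1 * ((p.2 : ℝ) ^ 2 * ‖θ‖ ^ p.2) :=
    hgeom.mul_of_nonneg (hmom 2) (fun _ => by positivity) (fun _ => by positivity)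
  refine (h₁.add h₂).congr fun p => ?_
  simp only [norm_mul, norm_pow]
  ring

theorem tsum_pow_mul_pow {θ : ℝ} (hθ : ‖θ‖ < 1) :
    ∑' p : ℕ × ℕ, θ ^ p.1 * θ ^ p.2 = ((1 - θ) ^ 2)⁻¹ := by
  have h := summable_norm_geometric_of_norm_lt_one hθ
  rw [← tsum_mul_tsum_of_summable_norm h h, tsum_geometric_of_norm_lt_one hθ, sq, mul_inv]

namespace Hypothesis11

variable {Ω : Type*} [MeasurableSpace Ω] {P : Measure Ω} {ξ : ℤ → Ω → ℝ} {ρ : ℤ → ℝ}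
  {L : ℝ → ℝ} {H : ℝ}

theorem integral_sq_eq_one (hyp : Hypothesis11 P ξ ρ L H) (t : ℤ) : ∫ ω, ξ t ω ^ 2 ∂P = 1 := by
  simpa only [sq, sub_self, hyp.rho_zero] using hyp.cov t t

theorem eLpNorm_two_eq_one (hyp : Hypothesis11 P ξ ρ L H) (t : ℤ) : eLpNorm (ξ t) 2 P = 1 := by
  have hint : Integrable (fun ω => ξ t ω ^ 2) P :=
    Integrable.of_integral_ne_zero (by simp [hyp.integral_sq_eq_one t])
  have hmem := (memLp_two_iff_integrable_sq (hyp.meas t).aestronglyMeasurable).2 hint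
  rw [hmem.eLpNorm_eq_integral_rpow_norm two_ne_zero ENNReal.ofNat_ne_top]
  simp [hyp.integral_sq_eq_one t]

theorem abs_rho_le_one (hyp : Hypothesis11 P ξ ρ L H) (m : ℤ) : |ρ m| ≤ 1 := by
  have h := enorm_integral_le_lintegral_enorm (μ := P) (fun ω => ξ 0 ω * ξ m ω)
  rw [hyp.cov, sub_zero] at h
  have h1 := lintegral_enorm_mul_le_of_eLpNorm_le (M := 1)
    (fun t => (hyp.meas t).aestronglyMeasurable) (fun t => (hyp.eLpNorm_two_eq_one t).le) 0 m
  have : ‖ρ m‖ₑ ≤ 1 := h.trans (by simpa using h1)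
  simpa [Real.enorm_eq_ofReal_abs] using this

theorem RY_eq_tsum (hyp : Hypothesis11 P ξ ρ L H) {θ : ℝ} (hθ : ‖θ‖ < 1) (k : ℤ) :
    RY P θ ξ k = ∑' p : ℕ × ℕ, θ ^ p.1 * θ ^ p.2 * ρ (k + p.1 - p.2) := by
  rw [RY, integral_Ysol_mul_Ysol (M := 1) (fun t => (hyp.meas t).aestronglyMeasurable)
    (fun t => (hyp.eLpNorm_two_eq_one t).le) hθ]
  congr with p
  rw [hyp.cov]
  congr 2
  ring

theorem rho_eq_of_pos (hyp : Hypothesis11 P ξ ρ L H) {n : ℤ} (hn : 0 < n) :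
    ρ n = L n * (n : ℝ) ^ (2 * H - 2) := by
  rw [hyp.rho_eq n hn.ne', abs_of_pos (by exact_mod_cast hn)]

theorem tendsto_rho_add_div (hyp : Hypothesis11 P ξ ρ L H) (m : ℤ) :
    Tendsto (fun k : ℕ => ρ (k + m) / (L k * (k : ℝ) ^ (2 * H - 2))) atTop (𝓝 1) := by
  refine ((hyp.Lslow.tendsto_mul_rpow_div hyp.Lpos (2 * H - 2) m).comp
    tendsto_natCast_atTop_atTop).congr' ?_
  filter_upwards [eventually_gt_atTop m.natAbs] with k hk
  rw [Function.comp_apply, hyp.rho_eq_of_pos (by omega)]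
  push_cast
  rfl

theorem eventually_abs_rho_div_le (hyp : Hypothesis11 P ξ ρ L H) :
    ∀ᶠ k : ℕ in atTop, ∀ i j : ℕ, 2 * j ≤ k →
      |ρ (k + i - j) / (L k * (k : ℝ) ^ (2 * H - 2))| ≤ 4 * (1 + i) := by
  obtain ⟨hH₁, hH₂⟩ := hyp.Hmem
  obtain ⟨x₀, hx₀, hbound⟩ :=
    hyp.Lslow.exists_mul_rpow_div_le hyp.Lpos (α := 2 * H - 2) (by linarith) (by linarith)
  filter_upwards [tendsto_natCast_atTop_atTop.eventually_ge_atTop (max (2 * x₀) 1)]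
    with k hk i j hj
  obtain ⟨hkx₀, hk₁⟩ := max_le_iff.1 hk
  have hj' : 2 * (j : ℝ) ≤ k := by exact_mod_cast hj
  have hk₀ : 0 < (k : ℝ) := by linarith
  have hn : 0 < (k : ℤ) + i - j := by
    have : 1 ≤ k := by exact_mod_cast hk₁
    omega
  rw [hyp.rho_eq_of_pos hn, abs_of_nonneg]
  · push_cast
    exact hbound k _ i (by linarith) hk₁ (by linarith) (by linarith) (Nat.cast_nonneg i)
  · have hn' : (0 : ℝ) < ((k + i - j : ℤ) : ℝ) := Int.cast_pos.2 hn
    exact div_nonneg (mul_nonneg (hyp.Lpos _ hn').le (rpow_nonneg hn'.le _))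
      (mul_nonneg (hyp.Lpos _ hk₀).le (rpow_nonneg hk₀.le _))

theorem exists_abs_rho_div_le_mul_sq (hyp : Hypothesis11 P ξ ρ L H) :
    ∃ D, ∀ᶠ k : ℕ in atTop, ∀ n : ℤ, |ρ n / (L k * (k : ℝ) ^ (2 * H - 2))| ≤ D * k ^ 2 := by
  obtain ⟨c, hc, hlow⟩ :=
    hyp.Lslow.exists_le_mul_rpow_mul_sq hyp.Lpos (α := 2 * H - 2) (by linarith [hyp.Hmem.1])
  refine ⟨c⁻¹, ?_⟩
  filter_upwards [tendsto_natCast_atTop_atTop.eventually hlow] with k hk n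
  have hr : 0 < L k * (k : ℝ) ^ (2 * H - 2) :=
    pos_of_mul_pos_left (hc.trans_le hk) (sq_nonneg _)
  rw [abs_div, abs_of_pos hr, div_le_iff₀ hr]
  calc |ρ n| ≤ c⁻¹ * c := by rw [inv_mul_cancel₀ hc.ne']; exact hyp.abs_rho_le_one n
    _ ≤ c⁻¹ * (L k * (k : ℝ) ^ (2 * H - 2) * k ^ 2) := by gcongr
    _ = c⁻¹ * k ^ 2 * (L k * (k : ℝ) ^ (2 * H - 2)) := by ring

end Hypothesis11

theorem stationary_solution_covariance_asymptotics_general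
    {Ω : Type*} [MeasurableSpace Ω] (P : Measure Ω)
    (ξ : ℤ → Ω → ℝ) (ρ : ℤ → ℝ) (L : ℝ → ℝ) (H θ : ℝ)
    (hyp : Hypothesis11 P ξ ρ L H) (hθ : θ ∈ Set.Ioo (0 : ℝ) 1) :
    ∃ C' : ℝ, 0 < C' ∧
      Tendsto (fun k : ℕ => RY P θ ξ k / (C' * L k * (k : ℝ) ^ (2 * H - 2)))
        atTop (𝓝 1) := by
  have hθ' : ‖θ‖ < 1 := by rw [Real.norm_of_nonneg hθ.1.le]; exact hθ.2
  obtain ⟨D, hfar⟩ := hyp.exists_abs_rho_div_le_mul_sq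
  have h := tendsto_tsum_mul_shift_div (summable_norm_pow_mul_pow_mul_moment hθ')
    hyp.tendsto_rho_add_div hyp.eventually_abs_rho_div_le hfar
  rw [tsum_pow_mul_pow hθ'] at h
  refine ⟨((1 - θ) ^ 2)⁻¹, by have := hθ.2; positivity, ?_⟩
  have hC : ((1 - θ) ^ 2)⁻¹ ≠ 0 := by have := hθ.2; positivity
  have h' := h.div_const ((1 - θ) ^ 2)⁻¹
  rw [div_self hC] at h'
  refine h'.congr fun k => ?_
  rw [hyp.RY_eq_tsum hθ', div_div]
  ring

/-- under Hypothesis 1.1 and `θ ∈ (0,1)`, the covariance of the stationary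
solution satisfies `R(k) ~ C'_{θ,H} L(k) k^{2H-2}` as `k → ∞`. -/
theorem stationary_solution_covariance_asymptotics
    {Ω : Type*} [MeasurableSpace Ω] (P : Measure Ω) [IsProbabilityMeasure P]
    (ξ : ℤ → Ω → ℝ) (ρ : ℤ → ℝ) (L : ℝ → ℝ) (H θ : ℝ)
    (hyp : Hypothesis11 P ξ ρ L H) (hθ : θ ∈ Set.Ioo (0 : ℝ) 1) :
    ∃ C' : ℝ, 0 < C' ∧
      Tendsto (fun k : ℕ => RY P θ ξ k / (C' * L k * (k : ℝ) ^ (2 * H - 2)))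
        atTop (𝓝 1) :=
  stationary_solution_covariance_asymptotics_general P ξ ρ L H θ hyp hθ
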